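/- Let γ : ℝ → ℝ³ be smooth with γ'(0) = 0 and γ''(0) × γ'''(0) ≠ 0. Let s_g(t) = ∫₀ᵗ |γ'(u)| du and τ(t) the torsion of γ at regular points t ≠ 0. Then lim_{t→0} sgn(t)·√|s_g(t)|·τ(t) = (2/(3√2)) · τ_sing, where τ_sing = √|γ''(0)| · det(γ''(0), γ'''(0), γ''''(0)) / |γ''(0) × γ'''(0)|². -/

import Mathlib

open Filter intervalIntegral ContDiff

noncomputable def n3 (v : Fin 3 → ℝ) : ℝ := Real.sqrt (v 0 ^ 2 + v 1 ^ 2 + v 2 ^ 2)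
noncomputable def cp3 (a b : Fin 3 → ℝ) : Fin 3 → ℝ := crossProduct a b
noncomputable def det3 (a b c : Fin 3 → ℝ) : ℝ :=
  Matrix.det !![a 0, b 0, c 0; a 1, b 1, c 1; a 2, b 2, c 2]

section helpers

variable {V : Type*} [NormedAddCommGroup V] [NormedSpace ℝ V] [CompleteSpace V]

omit [CompleteSpace V] in
lemma myContDiff_iteratedDeriv {f : ℝ → V} (hf : ContDiff ℝ ∞ f) (n : ℕ) :
    ContDiff ℝ ∞ (iteratedDeriv n f) := by
  induction n with
  | zero => simpa using hf
  | succ n ih => rw [iteratedDeriv_succ]; exact (contDiff_infty_iff_deriv.mp ih).2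

omit [CompleteSpace V] in
lemma myIteratedDeriv_add {f : ℝ → V} (m n : ℕ) :
    iteratedDeriv m (iteratedDeriv n f) = iteratedDeriv (m + n) f := by
  induction m with
  | zero => simp
  | succ m ih => rw [iteratedDeriv_succ, ih, ← iteratedDeriv_succ]; ring_nf

lemma taylor2V {f : ℝ → V} (hf : ContDiff ℝ ∞ f) :
    ∃ R : ℝ → V, Continuous R ∧ R 0 = (6:ℝ)⁻¹ • iteratedDeriv 3 f 0 ∧
      ∀ t, f t = f 0 + t • deriv f 0 + (t^2/2) • iteratedDeriv 2 f 0 + t^3 • R t := by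
  have h1V : (∞ : WithTop ℕ∞) ≠ 0 := by simp
  have hc3 : Continuous (iteratedDeriv 3 f) := (myContDiff_iteratedDeriv hf 3).continuous
  refine ⟨fun t => ∫ v in (0:ℝ)..1, ((1-v)^2/2) • iteratedDeriv 3 f (t*v), ?_, ?_, ?_⟩
  · apply intervalIntegral.continuous_parametric_intervalIntegral_of_continuous'
    apply Continuous.smul
    · fun_prop
    · exact hc3.comp (by fun_prop)
  · simp only [zero_mul]
    rw [intervalIntegral.integral_smul_const]
    have h16 : (∫ v in (0:ℝ)..1, (1-v)^2/2) = 1/6 := by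
      have e : (∫ v in (0:ℝ)..1, (1-v)^2/2)
          = ∫ v in (0:ℝ)..1, (v^2/2 - v + 1/2) := by congr 1; funext v; ring
      have i1 : IntervalIntegrable (fun v:ℝ => v^2/2) MeasureTheory.volume 0 1 := by
        apply Continuous.intervalIntegrable; fun_prop
      have i2 : IntervalIntegrable (fun v:ℝ => v) MeasureTheory.volume 0 1 := by
        apply Continuous.intervalIntegrable; fun_prop
      have i3 : IntervalIntegrable (fun v:ℝ => (1:ℝ)/2) MeasureTheory.volume 0 1 := by
        apply Continuous.intervalIntegrable; fun_prop
      rw [e, intervalIntegral.integral_add (i1.sub i2) i3, intervalIntegral.integral_sub i1 i2]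
      simp [intervalIntegral.integral_div, integral_pow, integral_id]
      norm_num
    rw [h16]; norm_num
  · intro t
    have hd1 : ∀ x, HasDerivAt f (deriv f x) x :=
      fun x => ((hf.differentiable h1V) x).hasDerivAt
    have hd2 : ∀ x, HasDerivAt (deriv f) (iteratedDeriv 2 f x) x := by
      intro x
      have h := (((myContDiff_iteratedDeriv hf 1).differentiable h1V) x).hasDerivAt
      rw [iteratedDeriv_one] at h
      have e : iteratedDeriv 2 f x = deriv (deriv f) x := by
        rw [iteratedDeriv_succ, iteratedDeriv_one]
      rw [e]; exact h
    have hd3 : ∀ x, HasDerivAt (iteratedDeriv 2 f) (iteratedDeriv 3 f x) x := by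
      intro x
      have h := (((myContDiff_iteratedDeriv hf 2).differentiable h1V) x).hasDerivAt
      rw [show iteratedDeriv 3 f = deriv (iteratedDeriv 2 f) from iteratedDeriv_succ]
      exact h
    set ψ : ℝ → V := fun v =>
      f (t*v) + (t - t*v) • deriv f (t*v) + ((t - t*v)^2/2) • iteratedDeriv 2 f (t*v) with hψ
    have key : ∀ v ∈ Set.uIcc (0:ℝ) 1,
        HasDerivAt ψ ((t^3 * ((1-v)^2/2)) • iteratedDeriv 3 f (t*v)) v := by
      intro v _
      have hmul : HasDerivAt (fun v : ℝ => t * v) t v := by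
        simpa using (hasDerivAt_id v).const_mul t
      have h0 : HasDerivAt (fun v => f (t*v)) (t • deriv f (t*v)) v :=
        (hd1 (t*v)).scomp v hmul
      have h1 : HasDerivAt (fun v => deriv f (t*v)) (t • iteratedDeriv 2 f (t*v)) v :=
        (hd2 (t*v)).scomp v hmul
      have h2 : HasDerivAt (fun v => iteratedDeriv 2 f (t*v)) (t • iteratedDeriv 3 f (t*v)) v :=
        (hd3 (t*v)).scomp v hmul
      have hs1 : HasDerivAt (fun v : ℝ => t - t*v) (-t) v := by
        simpa using (hmul.const_sub t)
      have hs2 : HasDerivAt (fun v : ℝ => (t - t*v)^2/2) (-t * (t - t*v)) v := by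
        have := (hs1.pow 2).div_const 2
        exact this.congr_deriv (by norm_num; ring)
      have := (h0.add (hs1.smul h1)).add (hs2.smul h2)
      convert this using 1
      · rfl
      module
    have hint : IntervalIntegrable (fun v => (t^3 * ((1-v)^2/2)) • iteratedDeriv 3 f (t*v))
        MeasureTheory.volume 0 1 := by
      apply Continuous.intervalIntegrable
      exact (by fun_prop : Continuous fun v : ℝ => t^3 * ((1-v)^2/2)).smul (hc3.comp (by fun_prop))
    have heq := intervalIntegral.integral_eq_sub_of_hasDerivAt key hint
    have hψ1 : ψ 1 = f t := by simp [hψ]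
    have hψ0 : ψ 0 = f 0 + t • deriv f 0 + (t^2/2) • iteratedDeriv 2 f 0 := by simp [hψ]
    rw [hψ1, hψ0] at heq
    have hpull : (∫ v in (0:ℝ)..1, (t^3 * ((1-v)^2/2)) • iteratedDeriv 3 f (t*v))
        = t^3 • ∫ v in (0:ℝ)..1, ((1-v)^2/2) • iteratedDeriv 3 f (t*v) := by
      rw [← intervalIntegral.integral_smul]
      congr 1; funext v; rw [smul_smul]
    rw [hpull] at heq
    show f t = f 0 + t • deriv f 0 + (t^2/2) • iteratedDeriv 2 f 0 +
      t^3 • ∫ v in (0:ℝ)..1, ((1-v)^2/2) • iteratedDeriv 3 f (t*v)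
    rw [heq]
    abel

end helpers

lemma n3_continuous : Continuous n3 := by
  unfold n3
  fun_prop

lemma n3_nonneg (v : Fin 3 → ℝ) : 0 ≤ n3 v := Real.sqrt_nonneg _

lemma n3_smul (c : ℝ) (v : Fin 3 → ℝ) : n3 (c • v) = |c| * n3 v := by
  unfold n3
  have e : (c • v) 0 ^ 2 + (c • v) 1 ^ 2 + (c • v) 2 ^ 2
      = c^2 * (v 0 ^ 2 + v 1 ^ 2 + v 2 ^ 2) := by
    simp [Pi.smul_apply, smul_eq_mul]; ring
  rw [e, Real.sqrt_mul (sq_nonneg c), Real.sqrt_sq_eq_abs]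

lemma n3_ne_zero {v : Fin 3 → ℝ} (hv : v ≠ 0) : n3 v ≠ 0 := by
  intro h
  apply hv
  unfold n3 at h
  rw [Real.sqrt_eq_zero'] at h
  have h0 : v 0 = 0 := by nlinarith [sq_nonneg (v 0), sq_nonneg (v 1), sq_nonneg (v 2)]
  have h1 : v 1 = 0 := by nlinarith [sq_nonneg (v 0), sq_nonneg (v 1), sq_nonneg (v 2)]
  have h2 : v 2 = 0 := by nlinarith [sq_nonneg (v 0), sq_nonneg (v 1), sq_nonneg (v 2)]
  funext i
  fin_cases i <;> assumption

lemma det3_scale (t : ℝ) (B C F : Fin 3 → ℝ) :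
    det3 (t • B) (B + t • C) ((2:ℝ) • C + t • F) = t^3 * det3 B C F := by
  simp [det3, Matrix.det_fin_three, Pi.add_apply, Pi.smul_apply, smul_eq_mul]
  ring

lemma det3_formula (a b c : Fin 3 → ℝ) :
    det3 a b c = a 0 * b 1 * c 2 - a 0 * b 2 * c 1 - a 1 * b 0 * c 2
      + a 1 * b 2 * c 0 + a 2 * b 0 * c 1 - a 2 * b 1 * c 0 := by
  simp [det3, Matrix.det_fin_three]
  ring

lemma det3_final (a b c : Fin 3 → ℝ) :
    det3 a ((2:ℝ)⁻¹ • b) ((2:ℝ) • ((6:ℝ)⁻¹ • c)) = (1/6) * det3 a b c := by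
  simp [det3_formula, Pi.smul_apply, smul_eq_mul]
  ring

lemma cp3_scale (t : ℝ) (B C : Fin 3 → ℝ) :
    cp3 (t • B) (B + t • C) = (t^2) • cp3 B C := by
  funext i
  fin_cases i <;>
    simp [cp3, cross_apply, Pi.add_apply, Pi.smul_apply, smul_eq_mul] <;> ring

lemma cp3_smul_right (a : Fin 3 → ℝ) (r : ℝ) (b : Fin 3 → ℝ) :
    cp3 a (r • b) = r • cp3 a b := by
  funext i
  fin_cases i <;>
    simp [cp3, cross_apply, Pi.smul_apply, smul_eq_mul] <;> ring

lemma cp3_continuous {f g : ℝ → Fin 3 → ℝ} (hf : Continuous f) (hg : Continuous g) :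
    Continuous fun t => cp3 (f t) (g t) := by
  apply continuous_pi
  intro i
  fin_cases i <;> simp [cp3, cross_apply] <;> fun_prop

lemma sign_mul_abs' {t : ℝ} (ht : t ≠ 0) : Real.sign t * |t| = t := by
  rcases lt_trichotomy t 0 with h | h | h
  · rw [Real.sign_of_neg h, abs_of_neg h]; ring
  · exact absurd h ht
  · rw [Real.sign_of_pos h, abs_of_pos h]; ring

/-- Torsion of a space curve. -/
noncomputable def tors (γ : ℝ → Fin 3 → ℝ) (t : ℝ) : ℝ :=
  det3 (deriv γ t) (iteratedDeriv 2 γ t) (iteratedDeriv 3 γ t) /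
    (n3 (cp3 (deriv γ t) (iteratedDeriv 2 γ t))) ^ 2

/-- Cuspidal torsion. -/
noncomputable def cuspTors (γ : ℝ → Fin 3 → ℝ) : ℝ :=
  Real.sqrt (n3 (iteratedDeriv 2 γ 0)) *
    det3 (iteratedDeriv 2 γ 0) (iteratedDeriv 3 γ 0) (iteratedDeriv 4 γ 0) /
      (n3 (cp3 (iteratedDeriv 2 γ 0) (iteratedDeriv 3 γ 0))) ^ 2

theorem stmt6 (γ : ℝ → Fin 3 → ℝ) (hγ : ContDiff ℝ (⊤ : ℕ∞) γ)
    (h1 : deriv γ 0 = 0)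
    (h2 : cp3 (iteratedDeriv 2 γ 0) (iteratedDeriv 3 γ 0) ≠ 0)
    (s : ℝ → ℝ) (hs : ∀ t, s t = ∫ u in (0 : ℝ)..t, n3 (deriv γ u)) :
    Tendsto (fun t => Real.sign t * Real.sqrt |s t| * tors γ t)
      (nhdsWithin 0 {(0 : ℝ)}ᶜ)
      (nhds (2 / (3 * Real.sqrt 2) * cuspTors γ)) := by
  have hgs : ContDiff ℝ ∞ γ := hγ.of_le (by simp)
  set a := iteratedDeriv 2 γ 0 with ha
  set b := iteratedDeriv 3 γ 0 with hb
  set c := iteratedDeriv 4 γ 0 with hc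
  set d := iteratedDeriv 5 γ 0 with hd
  -- iterated derivative bookkeeping
  have ed1 : iteratedDeriv 1 γ = deriv γ := iteratedDeriv_one
  have e2 : iteratedDeriv 2 (deriv γ) = iteratedDeriv 3 γ := by
    rw [← ed1, myIteratedDeriv_add]
  have e3 : iteratedDeriv 3 (deriv γ) = iteratedDeriv 4 γ := by
    rw [← ed1, myIteratedDeriv_add]
  have e4 : deriv (deriv γ) = iteratedDeriv 2 γ := by
    rw [← iteratedDeriv_one (f := deriv γ), ← ed1, myIteratedDeriv_add]
  have e5 : deriv (iteratedDeriv 2 γ) = iteratedDeriv 3 γ := (iteratedDeriv_succ).symm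
  have e6 : iteratedDeriv 2 (iteratedDeriv 2 γ) = iteratedDeriv 4 γ := myIteratedDeriv_add 2 2
  have e7 : iteratedDeriv 3 (iteratedDeriv 2 γ) = iteratedDeriv 5 γ := myIteratedDeriv_add 3 2
  have e8 : deriv (iteratedDeriv 3 γ) = iteratedDeriv 4 γ := (iteratedDeriv_succ).symm
  have e9 : iteratedDeriv 2 (iteratedDeriv 3 γ) = iteratedDeriv 5 γ := myIteratedDeriv_add 2 3
  -- Taylor expansions
  have hf1s : ContDiff ℝ ∞ (deriv γ) := (contDiff_infty_iff_deriv.mp hgs).2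
  obtain ⟨E₁, hE₁c, hE₁0, hE₁⟩ := taylor2V hf1s
  rw [e3] at hE₁0
  obtain ⟨R₂, hR₂c, _, hR₂⟩ := taylor2V (myContDiff_iteratedDeriv hgs 2)
  obtain ⟨R₃, hR₃c, _, hR₃⟩ := taylor2V (myContDiff_iteratedDeriv hgs 3)
  -- the normalized columns
  set B : ℝ → Fin 3 → ℝ := fun t => a + (t/2) • b + t^2 • E₁ t with hBdef
  set C : ℝ → Fin 3 → ℝ := fun t => (1/2 : ℝ) • b + (t/2) • c + t^2 • R₂ t - t • E₁ t with hCdef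
  set F : ℝ → Fin 3 → ℝ := fun t => (2:ℝ) • E₁ t + (t/2) • d + t^2 • R₃ t - (2*t) • R₂ t
    with hFdef
  have hBc : Continuous B := by fun_prop
  have hCc : Continuous C := by fun_prop
  have hFc : Continuous F := by fun_prop
  have hB0 : B 0 = a := by simp [hBdef]
  have hC0 : C 0 = (2:ℝ)⁻¹ • b := by norm_num [hCdef]
  have hF0 : F 0 = (2:ℝ) • ((6:ℝ)⁻¹ • c) := by simp [hFdef, hE₁0, hc]
  -- expansion identities
  have hB : ∀ t, deriv γ t = t • B t := by
    intro t
    have h := hE₁ t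
    rw [h1, e4, e2, ← ha, ← hb] at h
    rw [h, hBdef]
    module
  have hBC : ∀ t, iteratedDeriv 2 γ t = B t + t • C t := by
    intro t
    have h := hR₂ t
    rw [e5, e6, ← ha, ← hb, ← hc] at h
    rw [h, hBdef, hCdef]
    module
  have hCF : ∀ t, iteratedDeriv 3 γ t = (2:ℝ) • C t + t • F t := by
    intro t
    have h := hR₃ t
    rw [e8, e9, ← hb, ← hc, ← hd] at h
    rw [h, hCdef, hFdef]
    module
  -- arc-length
  have hderivc : Continuous (deriv γ) := hf1s.continuous
  set H : ℝ → ℝ := fun t => ∫ σ in (0:ℝ)..1, σ * n3 (B (t*σ)) with hHdef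
  have hHc : Continuous H := by
    apply intervalIntegral.continuous_parametric_intervalIntegral_of_continuous'
    have : Continuous fun p : ℝ × ℝ => p.2 * n3 (B (p.1 * p.2)) :=
      continuous_snd.mul (n3_continuous.comp (hBc.comp (continuous_fst.mul continuous_snd)))
    exact this
  have hH0 : H 0 = n3 a / 2 := by
    rw [hHdef]
    simp only [zero_mul, hB0]
    rw [intervalIntegral.integral_mul_const, integral_id]
    norm_num
    ring
  have hHnn : ∀ t, 0 ≤ H t := by
    intro t
    apply intervalIntegral.integral_nonneg (by norm_num)
    intro σ hσ
    exact mul_nonneg hσ.1 (n3_nonneg _)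
  have hsH : ∀ t, s t = t * |t| * H t := by
    intro t
    have hsub : (∫ σ in (0:ℝ)..1, t • n3 (deriv γ (t*σ))) = ∫ u in (0:ℝ)..t, n3 (deriv γ u) := by
      have hcomp := intervalIntegral.integral_comp_smul_deriv
        (a := 0) (b := 1) (f := fun σ : ℝ => t * σ) (f' := fun _ : ℝ => t)
        (g := fun u => n3 (deriv γ u))
        (fun x _ => by simpa using (hasDerivAt_id x).const_mul t)
        continuousOn_const (n3_continuous.comp hderivc)
      simpa using hcomp
    rw [hs t, ← hsub]
    have : (∫ σ in (0:ℝ)..1, t • n3 (deriv γ (t*σ)))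
        = ∫ σ in (0:ℝ)..1, (t * |t|) * (σ * n3 (B (t*σ))) := by
      apply intervalIntegral.integral_congr
      intro σ hσ
      rw [Set.uIcc_of_le (by norm_num : (0:ℝ) ≤ 1)] at hσ
      have hσ0 : 0 ≤ σ := hσ.1
      show t • n3 (deriv γ (t*σ)) = t * |t| * (σ * n3 (B (t*σ)))
      rw [hB (t*σ), n3_smul, abs_mul, abs_of_nonneg hσ0, smul_eq_mul]
      ring
    rw [this, intervalIntegral.integral_const_mul]
  -- the limit function
  set X : ℝ → ℝ := fun t => det3 (B t) (C t) (F t) with hXdef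
  set G : ℝ → ℝ := fun t => n3 (cp3 (B t) (C t)) with hGdef
  set Φ : ℝ → ℝ := fun t => Real.sqrt (H t) * (X t / (G t)^2) with hΦdef
  have hXc : Continuous X := by
    unfold X
    simp only [det3_formula]
    fun_prop
  have hGc : Continuous G := n3_continuous.comp (cp3_continuous hBc hCc)
  have hG0 : G 0 ≠ 0 := by
    rw [hGdef]
    simp only [hB0, hC0]
    rw [cp3_smul_right, n3_smul]
    exact mul_ne_zero (by norm_num) (n3_ne_zero h2)
  -- equality away from 0
  have hEq : ∀ t : ℝ, t ≠ 0 →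
      Real.sign t * Real.sqrt |s t| * tors γ t = Φ t := by
    intro t ht
    have habs : |s t| = t^2 * H t := by
      rw [hsH t, abs_mul, abs_mul, abs_abs, abs_of_nonneg (hHnn t)]
      rw [← sq_abs]
      ring
    have hsqrt : Real.sqrt |s t| = |t| * Real.sqrt (H t) := by
      rw [habs, Real.sqrt_mul (sq_nonneg t), Real.sqrt_sq_eq_abs]
    have hnum : det3 (deriv γ t) (iteratedDeriv 2 γ t) (iteratedDeriv 3 γ t) = t^3 * X t := by
      rw [hB t, hBC t, hCF t, det3_scale]
    have hden : n3 (cp3 (deriv γ t) (iteratedDeriv 2 γ t)) = t^2 * G t := by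
      rw [hB t, hBC t, cp3_scale, n3_smul, abs_sq]
    have : tors γ t = t^3 * X t / (t^2 * G t)^2 := by
      rw [tors, hnum, hden]
    rw [this, hsqrt, ← mul_assoc, sign_mul_abs' ht, hΦdef]
    rcases eq_or_ne (G t) 0 with hG | hG
    · simp [hG]
    · field_simp
  -- conclude
  have hΦ0 : Φ 0 = 2 / (3 * Real.sqrt 2) * cuspTors γ := by
    rw [hΦdef]
    simp only [hH0, hXdef, hGdef, hB0, hC0, hF0]
    rw [det3_final, cp3_smul_right, n3_smul]
    rw [cuspTors, ← ha, ← hb, ← hc]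
    have hK : n3 (cp3 a b) ≠ 0 := n3_ne_zero h2
    have hs2 : Real.sqrt (n3 a / 2) = Real.sqrt (n3 a) / Real.sqrt 2 :=
      Real.sqrt_div (n3_nonneg a) 2
    rw [hs2, abs_of_pos (by norm_num : (0:ℝ) < (2:ℝ)⁻¹)]
    have h2pos : (0:ℝ) < Real.sqrt 2 := Real.sqrt_pos.mpr (by norm_num)
    field_simp
    ring
  rw [← hΦ0]
  have hcont : ContinuousAt Φ 0 := by
    apply ContinuousAt.mul
    · exact (Real.continuous_sqrt.comp hHc).continuousAt
    · exact ContinuousAt.div hXc.continuousAt ((hGc.pow 2).continuousAt)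
        (pow_ne_zero 2 hG0)
  have := hcont.continuousWithinAt (s := {(0:ℝ)}ᶜ)
  refine Tendsto.congr' ?_ this
  filter_upwards [self_mem_nhdsWithin] with t ht
  exact (hEq t ht).symm
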